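/- arXiv:1306.1770 — 6 statements merged into one kernel-verified Lean document; each statement's English description precedes it below -/
import Mathlib

section
/- Let p be a prime and a a natural number with base-p digits a_0, a_1, a_2, .... Suppose a_t ≠ p-1 for some t, and let m = min{ t : a_t < p-1 }. Then p does not divide C(a + p^m, p^m), while p divides C(a + p^{d'}, p^{d'}) for every d' < m. -/
/-!
By Lucas's theorem `C(n, p^m) ≡ ⌊n / p^m⌋ (mod p)`, since `p^m` has the single base-`p` digit
`1` in position `m`. For `n = a + p^m` this is `a / p^m + 1`, so `p ∣ C(a + p^m, p^m)` exactly
when the `m`-th digit of `a` is `p - 1`.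
-/

theorem Nat.choose_pow_modEq_div {p : ℕ} [Fact p.Prime] (n m : ℕ) :
    n.choose (p ^ m) ≡ n / p ^ m [MOD p] := by
  induction m generalizing n with
  | zero => simp [Nat.ModEq.refl]
  | succ m ih =>
    have hp := (Fact.out : p.Prime).pos
    calc n.choose (p ^ (m + 1))
        ≡ (n % p).choose (p ^ (m + 1) % p) * (n / p).choose (p ^ (m + 1) / p) [MOD p] :=
          Choose.choose_modEq_choose_mod_mul_choose_div_nat
      _ = (n / p).choose (p ^ m) := by
          rw [pow_succ, Nat.mul_mod_left, Nat.mul_div_cancel _ hp, Nat.choose_zero_right, one_mul]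
      _ ≡ n / p / p ^ m [MOD p] := ih _
      _ = n / p ^ (m + 1) := by rw [Nat.div_div_eq_div_mul, pow_succ']

theorem Nat.dvd_add_one_iff_mod_eq_sub_one {p : ℕ} (hp : 0 < p) (x : ℕ) :
    p ∣ x + 1 ↔ x % p = p - 1 := by
  have hr := Nat.mod_lt x hp
  conv_lhs => rw [← Nat.div_add_mod x p, add_assoc, Nat.dvd_add_right (dvd_mul_right _ _)]
  constructor
  · intro h
    have := Nat.le_of_dvd (Nat.succ_pos _) h
    omega
  · intro h
    rw [h, Nat.sub_add_cancel hp]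

theorem Nat.Prime.dvd_choose_add_pow_iff {p : ℕ} (hp : p.Prime) (a m : ℕ) :
    p ∣ (a + p ^ m).choose (p ^ m) ↔ a / p ^ m % p = p - 1 := by
  have := Fact.mk hp
  rw [(Nat.choose_pow_modEq_div _ m).dvd_iff dvd_rfl, Nat.add_div_right _ (pow_pos hp.pos m)]
  exact Nat.dvd_add_one_iff_mod_eq_sub_one hp.pos _

/-- If `m` is the least index whose base-`p` digit of `a` is `< p-1`, then
`p ∤ C(a + p^m, p^m)` while `p ∣ C(a + p^{d'}, p^{d'})` for all `d' < m`. -/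
theorem stmt_2 (p a m : ℕ) (hp : p.Prime)
    (hm : a / p ^ m % p < p - 1)
    (hmin : ∀ t : ℕ, t < m → a / p ^ t % p = p - 1) :
    ¬ p ∣ Nat.choose (a + p ^ m) (p ^ m) ∧
      ∀ d' : ℕ, d' < m → p ∣ Nat.choose (a + p ^ d') (p ^ d') := by
  refine ⟨fun h => ?_, fun d' hd' => (hp.dvd_choose_add_pow_iff a d').mpr (hmin d' hd')⟩
  rw [hp.dvd_choose_add_pow_iff] at h
  omega
end

section
/- Let p be a prime, t_2, t_3 natural numbers, and m a natural number. Then p divides every product C(t_2 + s, s) · C(t_3 + t, t) over all pairs of natural numbers (s,t) with s + t = p^{d'} for some 0 ≤ d' ≤ m, if and only if the base-p digits of t_2 in positions 0 through m are all equal to p-1 and the base-p digits of t_3 in positions 0 through m are all equal to p-1. -/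
/-!
By Lucas' theorem, `C(n + p k, p k) ≡ C(⌊n / p⌋ + k, k) (mod p)`, so multiplying the lower index
by `p` just shifts the digits of `n` down by one. Iterating, `p ∣ C(n + p ^ j, p ^ j)` reduces to
`p ∣ n / p ^ j + 1`, i.e. to the `j`-th digit of `n` being `p - 1`; this gives the forward
direction with `(s, t) = (p ^ i, 0)` and `(0, p ^ i)`. Conversely, for `0 < s ≤ p ^ m` strip the
factors `p` from `s`; at its lowest nonzero digit, adding it to the digit `p - 1` of the shifted
`n` carries, and Lucas' theorem makes the binomial vanish modulo `p`.
-/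

namespace Nat

variable {p : ℕ} [hp : Fact p.Prime]

theorem choose_add_mul_modEq_choose_div_add (n k : ℕ) :
    choose (n + p * k) (p * k) ≡ choose (n / p + k) k [MOD p] := by
  have hp0 : 0 < p := hp.out.pos
  have h :=
    Choose.choose_modEq_choose_mod_mul_choose_div_nat (p := p) (n := n + p * k) (k := p * k)
  rwa [add_mul_mod_self_left, mul_mod_right, choose_zero_right, one_mul,
    add_mul_div_left _ _ hp0, mul_div_cancel_left₀ _ hp0.ne'] at h

theorem dvd_add_one_iff_mod_eq_sub_one_s3 (n : ℕ) : p ∣ n + 1 ↔ n % p = p - 1 := by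
  have hlt := mod_lt n hp.out.pos
  rw [dvd_iff_mod_eq_zero, add_mod, one_mod_eq_one.mpr hp.out.one_lt.ne']
  rcases lt_or_ge (n % p + 1) p with h | h
  · rw [mod_eq_of_lt h]; omega
  · rw [show n % p + 1 = p by omega, mod_self]; omega

theorem dvd_choose_add_pow_iff (j n : ℕ) :
    p ∣ choose (n + p ^ j) (p ^ j) ↔ n / p ^ j % p = p - 1 := by
  induction j generalizing n with
  | zero => simpa using dvd_add_one_iff_mod_eq_sub_one_s3 n
  | succ j ih =>
    rw [pow_succ', (choose_add_mul_modEq_choose_div_add n (p ^ j)).dvd_iff dvd_rfl, ih,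
      Nat.div_div_eq_div_mul]

theorem dvd_choose_add_of_mod_eq_sub_one {n s : ℕ} (hn : n % p = p - 1) (hs : ¬ p ∣ s) :
    p ∣ choose (n + s) s := by
  have hs0 : s % p ≠ 0 := fun h => hs (dvd_of_mod_eq_zero h)
  have hslt := mod_lt s hp.out.pos
  have hcarry : (n + s) % p < s % p := by
    rw [add_mod, hn, show p - 1 + s % p = s % p - 1 + p by omega, add_mod_right,
      mod_eq_of_lt (by omega)]
    omega
  have h := Choose.choose_modEq_choose_mod_mul_choose_div_nat (p := p) (n := n + s) (k := s)
  rw [choose_eq_zero_of_lt hcarry, zero_mul] at h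
  exact dvd_of_mod_eq_zero h

theorem dvd_choose_add_of_digits_eq_sub_one {m n s : ℕ}
    (hn : ∀ i ≤ m, n / p ^ i % p = p - 1) (hs0 : s ≠ 0) (hsm : s ≤ p ^ m) :
    p ∣ choose (n + s) s := by
  induction m generalizing n s with
  | zero =>
    obtain rfl : s = 1 := by simp at hsm; omega
    exact dvd_choose_add_of_mod_eq_sub_one (by simpa using hn 0 le_rfl) hp.out.not_dvd_one
  | succ m ih =>
    by_cases hps : p ∣ s
    · obtain ⟨k, rfl⟩ := hps
      rw [(choose_add_mul_modEq_choose_div_add n k).dvd_iff dvd_rfl]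
      refine ih (fun i hi => ?_) (right_ne_zero_of_mul hs0) ?_
      · rw [Nat.div_div_eq_div_mul, ← pow_succ']
        exact hn (i + 1) (by omega)
      · rw [pow_succ'] at hsm
        exact le_of_mul_le_mul_left hsm hp.out.pos
    · exact dvd_choose_add_of_mod_eq_sub_one (by simpa using hn 0 (zero_le _)) hps

end Nat

/-- `p` divides every product `C(t₂+s,s)·C(t₃+t,t)` with `s + t = p^{d'}` for some
`d' ≤ m` iff all base-`p` digits of `t₂` and of `t₃` in positions `0,…,m` equal `p-1`. -/
theorem stmt_3 (p t₂ t₃ m : ℕ) (hp : p.Prime) :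
    (∀ d' : ℕ, d' ≤ m → ∀ s t : ℕ, s + t = p ^ d' →
        p ∣ Nat.choose (t₂ + s) s * Nat.choose (t₃ + t) t) ↔
      ((∀ i : ℕ, i ≤ m → t₂ / p ^ i % p = p - 1) ∧
        (∀ i : ℕ, i ≤ m → t₃ / p ^ i % p = p - 1)) := by
  have : Fact p.Prime := ⟨hp⟩
  constructor
  · intro H
    refine ⟨fun i hi => (Nat.dvd_choose_add_pow_iff i t₂).1 ?_,
      fun i hi => (Nat.dvd_choose_add_pow_iff i t₃).1 ?_⟩
    · simpa using H i hi (p ^ i) 0 (add_zero _)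
    · simpa using H i hi 0 (p ^ i) (zero_add _)
  · rintro ⟨h₂, h₃⟩ d' hd' s t hst
    have hpow : p ^ d' ≤ p ^ m := Nat.pow_le_pow_right hp.pos hd'
    rcases eq_or_ne s 0 with rfl | hs
    · have ht : t ≠ 0 := by rw [← zero_add t, hst]; exact (pow_pos hp.pos d').ne'
      exact dvd_mul_of_dvd_right
        (Nat.dvd_choose_add_of_digits_eq_sub_one h₃ ht (by omega)) _
    · exact dvd_mul_of_dvd_left (Nat.dvd_choose_add_of_digits_eq_sub_one h₂ hs (by omega)) _
end

section
/- Let p be a prime and t_3 a natural number whose base-p digits in positions 0 through d all equal p-1 (for some natural number d), with digit 0 in position d+1, and suppose t_3 ≥ p^{d+1}. Then p divides C(t_3 - p^{d+1} + p^{d'}, p^{d'}) for every d' with 0 ≤ d' ≤ d+1. -/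
/-- Digit extraction: `n % p^(j+1) = p^j * (n / p^j % p) + n % p^j`. -/
lemma digit_split (n p j : ℕ) :
    n % p ^ (j + 1) = p ^ j * (n / p ^ j % p) + n % p ^ j := by
  have h1 : n / p ^ j % p = n % (p ^ j * p) / p ^ j :=
    (Nat.mod_mul_right_div_self n (p ^ j) p).symm
  have h2 : n % p ^ (j + 1) % p ^ j = n % p ^ j :=
    Nat.mod_mod_of_dvd n (pow_dvd_pow p (Nat.le_succ j))
  have h3 := Nat.div_add_mod (n % p ^ (j + 1)) (p ^ j)
  rw [h2] at h3
  rw [h1, ← pow_succ] at *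
  omega

/-- If the base-`p` digits of `t₃` in positions `0,…,d` all equal `p-1`, the digit in
position `d+1` is `0`, and `t₃ ≥ p^{d+1}`, then `p` divides
`C(t₃ - p^{d+1} + p^{d'}, p^{d'})` for every `d' ≤ d+1`. -/
theorem stmt_5 (p d t₃ : ℕ) (hp : p.Prime)
    (h₁ : ∀ i : ℕ, i ≤ d → t₃ / p ^ i % p = p - 1)
    (h₂ : t₃ / p ^ (d + 1) % p = 0)
    (h₃ : p ^ (d + 1) ≤ t₃) :
    ∀ d' : ℕ, d' ≤ d + 1 → p ∣ Nat.choose (t₃ - p ^ (d + 1) + p ^ d') (p ^ d') := by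
  have hp2 : 2 ≤ p := hp.two_le
  -- all low digits p-1 gives t₃ % p^j = p^j - 1 for j ≤ d+1
  have hmod : ∀ j : ℕ, j ≤ d + 1 → t₃ % p ^ j = p ^ j - 1 := by
    intro j hj
    induction j with
    | zero => simp [Nat.mod_one]
    | succ j ih =>
      have hjd : j ≤ d := by omega
      have hds := digit_split t₃ p j
      rw [h₁ j hjd, ih (by omega)] at hds
      have hpj : 1 ≤ p ^ j := Nat.one_le_pow _ _ (by omega)
      have hmul : p ^ j * (p - 1) = p ^ j * p - p ^ j := by
        rw [Nat.mul_sub, mul_one]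
      have hle : p ^ j ≤ p ^ j * p := Nat.le_mul_of_pos_right _ (by omega)
      rw [pow_succ] at hds ⊢
      omega
  -- digit d+1 is zero gives t₃ % p^(d+2) = p^(d+1) - 1
  have hmod2 : t₃ % p ^ (d + 2) = p ^ (d + 1) - 1 := by
    have := digit_split t₃ p (d + 1)
    rw [h₂, hmod (d + 1) le_rfl] at this
    simpa using this
  have hA1 : 1 ≤ p ^ (d + 1) := Nat.one_le_pow _ _ (by omega)
  obtain ⟨m, hdm⟩ : ∃ m, p ^ (d + 2) * m + (p ^ (d + 1) - 1) = t₃ := by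
    refine ⟨t₃ / p ^ (d + 2), ?_⟩
    have := Nat.div_add_mod t₃ (p ^ (d + 2))
    omega
  have hm1 : 1 ≤ m := by
    rcases Nat.eq_zero_or_pos m with h0 | h
    · rw [h0, mul_zero, zero_add] at hdm; omega
    · exact h
  intro d' hd'
  have hC1 : 1 ≤ p ^ d' := Nat.one_le_pow _ _ (by omega)
  have hn : t₃ - p ^ (d + 1) + p ^ d' = p ^ (d + 2) * m + (p ^ d' - 1) := by
    generalize hB : p ^ (d + 2) * m = B at hdm ⊢
    omega
  rw [hn]
  set n := p ^ (d + 2) * m + (p ^ d' - 1) with hndef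
  -- digit d' of n is 0
  have hnd : n / p ^ d' % p = 0 := by
    have hdiv : n / p ^ d' = p ^ (d + 2 - d') * m := by
      have he : p ^ (d + 2) = p ^ d' * p ^ (d + 2 - d') := by
        rw [← pow_add]; congr 1; omega
      have hz : (p ^ d' - 1) / p ^ d' = 0 := Nat.div_eq_of_lt (by omega)
      rw [hndef, he, mul_assoc,
        Nat.mul_add_div (Nat.pos_of_ne_zero (by positivity)), hz, add_zero]
    rw [hdiv]
    have hdvd : p ∣ p ^ (d + 2 - d') * m :=
      Dvd.dvd.mul_right (dvd_pow_self p (by omega)) m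
    exact Nat.mod_eq_zero_of_dvd hdvd
  have hkd : p ^ d' / p ^ d' % p = 1 := by
    rw [Nat.div_self (Nat.pos_of_ne_zero (by positivity))]
    exact Nat.mod_eq_of_lt (by omega)
  -- Lucas
  have hbig : ∀ x : ℕ, x < p ^ (x + 1) := fun x =>
    lt_of_lt_of_le (Nat.lt_pow_self (n := x) (by omega)) (Nat.pow_le_pow_right (by omega) (Nat.le_succ x))
  have hnB : p ^ (d + 2) ≤ n := by
    have h' : p ^ (d + 2) ≤ p ^ (d + 2) * m := Nat.le_mul_of_pos_right _ (by omega)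
    rw [hndef]
    exact le_trans h' (Nat.le_add_right _ _)
  have hd'n : d' < n + 1 := by
    have hb := hbig (d + 1)
    rw [show d + 1 + 1 = d + 2 from rfl] at hb
    omega
  have ha₁ : n < p ^ (n + 1) := hbig n
  have ha₂ : p ^ d' < p ^ (n + 1) := by
    have hCn : p ^ d' ≤ p ^ (d + 2) := Nat.pow_le_pow_right (by omega) (by omega)
    calc p ^ d' ≤ n := le_trans hCn hnB
    _ < p ^ (n + 1) := hbig n
  haveI : Fact p.Prime := ⟨hp⟩
  have hl := Choose.choose_modEq_prod_range_choose_nat ha₁ ha₂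
  have hzero : (∏ i ∈ Finset.range (n + 1),
      Nat.choose (n / p ^ i % p) (p ^ d' / p ^ i % p)) = 0 := by
    apply Finset.prod_eq_zero (Finset.mem_range.mpr hd'n)
    rw [hnd, hkd]
    simp
  rw [hzero] at hl
  exact (Nat.modEq_zero_iff_dvd).mp hl
end

section
/- Let p be a prime, d a natural number, and a, t a pair of natural numbers. Suppose the base-p expansion of a is a = (p-1) + (p-1)p + ... + (p-1)p^d + c·p^{d+1} with c ∈ {0,1}. Then for every d' with 0 ≤ d' ≤ d, p divides C(a + p^{d'}, p^{d'}). -/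
/-!
Since `a + 1 = (c + 1) p^{d+1}`, for `j ≤ d` the `j`-th base-`p` digit of `a + p^j` is `0` while
that of `p^j` is `1`. Concretely, Lucas' theorem applied to the lowest `j` digits gives
`C(n, p^j) ≡ C(n / p^j, 1) · (…) = (n / p^j) · (…) (mod p)`, and `p ∣ (a + p^j) / p^j`.
-/

open Finset

namespace Nat

theorem sum_range_pred_mul_pow_add_one {p : ℕ} (hp : 1 ≤ p) (n : ℕ) :
    ∑ i ∈ range n, (p - 1) * p ^ i + 1 = p ^ n := by
  zify [hp]
  rw [← mul_sum, mul_comm, geom_sum_mul]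
  ring

theorem Prime.dvd_choose_pow_of_dvd_div_pow {p n j : ℕ} (hp : p.Prime) (h : p ∣ n / p ^ j) :
    p ∣ n.choose (p ^ j) := by
  have : Fact p.Prime := ⟨hp⟩
  have lucas :=
    (Choose.choose_modEq_choose_mul_prod_range_choose (n := n) (k := p ^ j) (p := p) j).dvd
  rw [Nat.div_self (pow_pos hp.pos j), choose_one_right] at lucas
  have hquot : (p : ℤ) ∣ (n / p ^ j : ℕ) := Int.natCast_dvd_natCast.mpr h
  exact Int.natCast_dvd_natCast.mp ((dvd_sub_right (hquot.mul_right _)).mp lucas)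

theorem dvd_add_pow_div_pow_of_pow_succ_dvd_succ {p a j : ℕ} (hp : 0 < p)
    (h : p ^ (j + 1) ∣ a + 1) : p ∣ (a + p ^ j) / p ^ j := by
  obtain ⟨m, hm⟩ := h
  have hpj : 0 < p ^ j := pow_pos hp j
  have hm0 : 0 < m := Nat.pos_of_ne_zero (by rintro rfl; simp at hm)
  have hsplit : a + p ^ j = (p ^ j - 1) + p ^ j * (p * m) := by
    have : p ^ (j + 1) * m = p ^ j * (p * m) := by ring
    have : p ^ j ≤ p ^ j * (p * m) := Nat.le_mul_of_pos_right _ (Nat.mul_pos hp hm0)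
    omega
  rw [hsplit, Nat.add_mul_div_left _ _ hpj, Nat.div_eq_of_lt (Nat.sub_lt hpj one_pos), zero_add]
  exact dvd_mul_right p m

end Nat

/-- If `a = (p-1) + (p-1)p + ⋯ + (p-1)p^d + c·p^{d+1}` with `c ∈ {0,1}`, then
`p` divides `C(a + p^{d'}, p^{d'})` for every `d' ≤ d`. -/
theorem stmt_7 (p d a : ℕ) (hp : p.Prime)
    (ha : ∃ c : ℕ, c ≤ 1 ∧ a = (∑ i ∈ Finset.range (d + 1), (p - 1) * p ^ i) + c * p ^ (d + 1)) :
    ∀ d' : ℕ, d' ≤ d → p ∣ Nat.choose (a + p ^ d') (p ^ d') := by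
  obtain ⟨c, -, rfl⟩ := ha
  intro d' hd'
  have hsucc : (∑ i ∈ range (d + 1), (p - 1) * p ^ i) + c * p ^ (d + 1) + 1
      = p ^ (d + 1) * (c + 1) := by
    rw [add_right_comm, Nat.sum_range_pred_mul_pow_add_one hp.one_le]
    ring
  refine hp.dvd_choose_pow_of_dvd_div_pow (Nat.dvd_add_pow_div_pow_of_pow_succ_dvd_succ hp.pos ?_)
  rw [hsucc]
  exact (pow_dvd_pow p (by omega)).mul_right _
end

section
/- Let n, r be positive integers, λ ∈ Λ(n,r) with λ_n ≠ 0, and let m be a natural number with m ≤ λ_n. Define λ(n-1,m) = (λ_1, ..., λ_{n-1} + m, λ_n - m). Then J(λ) = { j ∈ J(λ(n-1,m)) : j ≥ l(λ) componentwise }. -/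
/-- The (0-indexed) row of position `ρ` in the basic tableau of shape `lam`. -/
noncomputable def rowOf (lam : ℕ → ℕ) (ρ : ℕ) : ℕ :=
  sInf {k : ℕ | ρ < ∑ i ∈ Finset.range (k + 1), lam i}

/-- `T_j^λ` is row-semistandard: entries are weakly increasing along each row. -/
def RowSemistandard {r : ℕ} (lam : ℕ → ℕ) (j : Fin r → ℕ) : Prop :=
  ∀ ρ ρ' : Fin r, rowOf lam ρ.val = rowOf lam ρ'.val → ρ ≤ ρ' → j ρ ≤ j ρ'

/-!
Moving `m` boxes from the last row `a + 1` up to row `a` enlarges only the partial row sum at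
`a`, so every position either keeps its row or moves from row `a + 1` to the end of row `a`;
in particular `l(λ(a, m)) ≤ l(λ)`. For `l(λ) ≤ j < a + 2` the moved positions carry the largest
possible entry `a + 1`, so moving them neither creates nor removes a descent within a row.
-/

open Finset

def partialSum (lam : ℕ → ℕ) (k : ℕ) : ℕ := ∑ i ∈ range (k + 1), lam i

lemma partialSum_mono (lam : ℕ → ℕ) : Monotone (partialSum lam) := fun _ _ h =>
  sum_le_sum_of_subset (range_subset_range.mpr (by omega))

section rowOf

variable {lam mu : ℕ → ℕ} {ρ ρ' t : ℕ}

lemma rowOf_le_iff (ht : ρ < partialSum lam t) (k : ℕ) :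
    rowOf lam ρ ≤ k ↔ ρ < partialSum lam k :=
  ⟨fun h => (Nat.sInf_mem (s := {k | ρ < partialSum lam k}) ⟨t, ht⟩).trans_le
    (partialSum_mono lam h), fun h => Nat.sInf_le h⟩

lemma lt_partialSum_rowOf (ht : ρ < partialSum lam t) : ρ < partialSum lam (rowOf lam ρ) :=
  (rowOf_le_iff ht _).1 le_rfl

lemma rowOf_le_rowOf (h : ρ ≤ ρ') (ht : ρ' < partialSum lam t) :
    rowOf lam ρ ≤ rowOf lam ρ' :=
  (rowOf_le_iff (h.trans_lt ht) _).2 (h.trans_lt (lt_partialSum_rowOf ht))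

lemma rowOf_le_rowOf_of_partialSum_le (hS : ∀ k, partialSum lam k ≤ partialSum mu k)
    (ht : ρ < partialSum lam t) : rowOf mu ρ ≤ rowOf lam ρ :=
  (rowOf_le_iff (ht.trans_le (hS t)) _).2 ((lt_partialSum_rowOf ht).trans_le (hS _))

lemma rowOf_eq_or_of_partialSum_le {a : ℕ} (hS : ∀ k, partialSum lam k ≤ partialSum mu k)
    (hlow : ∀ k < a, partialSum mu k = partialSum lam k) (hρ : ρ < partialSum lam (a + 1)) :
    rowOf mu ρ = rowOf lam ρ ∨ (rowOf mu ρ = a ∧ rowOf lam ρ = a + 1) := by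
  have hle := rowOf_le_rowOf_of_partialSum_le hS hρ
  have hlam : rowOf lam ρ ≤ a + 1 := (rowOf_le_iff hρ _).2 hρ
  have hmu : ρ < partialSum mu (rowOf mu ρ) := lt_partialSum_rowOf (hρ.trans_le (hS _))
  by_cases hlt : rowOf mu ρ < a
  · have : rowOf lam ρ ≤ rowOf mu ρ := (rowOf_le_iff hρ _).2 (hlow _ hlt ▸ hmu)
    omega
  · omega

end rowOf

/-- The paper's `λ(a + 1, m)`, whose rows are indexed from `1`. -/
def moveBoxes (lam : ℕ → ℕ) (a m : ℕ) : ℕ → ℕ := fun k =>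
  if k = a then lam a + m else if k = a + 1 then lam (a + 1) - m else lam k

section moveBoxes

variable {lam : ℕ → ℕ} {a m : ℕ}

lemma partialSum_moveBoxes_add (hm : m ≤ lam (a + 1)) (k : ℕ) :
    partialSum (moveBoxes lam a m) k + (if a + 1 ≤ k then m else 0) =
      partialSum lam k + (if a ≤ k then m else 0) := by
  have hind : ∀ b, (if b ≤ k then m else 0) = ∑ i ∈ range (k + 1), if i = b then m else 0 :=
    fun b => by simp [sum_ite_eq']
  rw [partialSum, partialSum, hind, hind, ← sum_add_distrib, ← sum_add_distrib]
  refine sum_congr rfl fun i _ => ?_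
  unfold moveBoxes
  split_ifs <;> subst_vars <;> omega

lemma partialSum_le_partialSum_moveBoxes (hm : m ≤ lam (a + 1)) (k : ℕ) :
    partialSum lam k ≤ partialSum (moveBoxes lam a m) k := by
  have := partialSum_moveBoxes_add hm k
  split_ifs at this <;> omega

lemma partialSum_moveBoxes_of_lt (hm : m ≤ lam (a + 1)) {k : ℕ} (hk : k < a) :
    partialSum (moveBoxes lam a m) k = partialSum lam k := by
  have := partialSum_moveBoxes_add hm k
  split_ifs at this <;> omega

end moveBoxes

/-- The paper's `J(μ) ⊆ I(n, r)`, with entries and rows indexed from `0`. -/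
def rowSemistandardIndices (r n : ℕ) (mu : ℕ → ℕ) : Set (Fin r → ℕ) :=
  {j | (∀ ρ, j ρ < n) ∧ (∀ ρ, rowOf mu ρ.val ≤ j ρ) ∧ RowSemistandard mu j}

lemma rowSemistandard_iff_of_partialSum_le {r a : ℕ} {lam mu : ℕ → ℕ}
    (hS : ∀ k, partialSum lam k ≤ partialSum mu k)
    (hlow : ∀ k < a, partialSum mu k = partialSum lam k) (hr : r ≤ partialSum lam (a + 1))
    {j : Fin r → ℕ} (hj : ∀ ρ, j ρ < a + 2) (hge : ∀ ρ, rowOf lam ρ.val ≤ j ρ) :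
    RowSemistandard mu j ↔ RowSemistandard lam j := by
  have hrow (ρ : Fin r) := rowOf_eq_or_of_partialSum_le hS hlow (ρ.isLt.trans_le hr)
  constructor
  · intro hmu ρ ρ' heq hle
    have hjρ := hj ρ; have hjρ' := hj ρ'; have hgeρ := hge ρ; have hgeρ' := hge ρ'
    rcases hrow ρ with h | h <;> rcases hrow ρ' with h' | h'
    · exact hmu ρ ρ' (by omega) hle
    all_goals omega
  · intro hlam ρ ρ' heq hle
    have hmono := rowOf_le_rowOf (lam := lam) (Fin.le_def.mp hle) (ρ'.isLt.trans_le hr)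
    have hjρ := hj ρ; have hgeρ' := hge ρ'
    rcases hrow ρ with h | h <;> rcases hrow ρ' with h' | h'
    · exact hlam ρ ρ' (by omega) hle
    all_goals omega

theorem rowSemistandardIndices_moveBoxes {r a m : ℕ} {lam : ℕ → ℕ} (hm : m ≤ lam (a + 1))
    (hr : r ≤ partialSum lam (a + 1)) :
    rowSemistandardIndices r (a + 2) lam =
      {j | j ∈ rowSemistandardIndices r (a + 2) (moveBoxes lam a m) ∧
        ∀ ρ, rowOf lam ρ.val ≤ j ρ} := by
  have hS := partialSum_le_partialSum_moveBoxes hm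
  have hlow := fun k => partialSum_moveBoxes_of_lt (k := k) hm
  have hrow_le (ρ : Fin r) : rowOf (moveBoxes lam a m) ρ.val ≤ rowOf lam ρ.val :=
    rowOf_le_rowOf_of_partialSum_le hS (ρ.isLt.trans_le hr)
  ext j
  constructor
  · rintro ⟨hj, hge, hss⟩
    exact ⟨⟨hj, fun ρ => (hrow_le ρ).trans (hge ρ),
      (rowSemistandard_iff_of_partialSum_le hS hlow hr hj hge).2 hss⟩, hge⟩
  · rintro ⟨⟨hj, -, hss⟩, hge⟩
    exact ⟨hj, hge, (rowSemistandard_iff_of_partialSum_le hS hlow hr hj hge).1 hss⟩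

theorem stmt_9_general (n r : ℕ) (hn : 2 ≤ n) (lam : ℕ → ℕ) (hsum : ∑ k ∈ Finset.range n, lam k = r)
    (m : ℕ) (hm : m ≤ lam (n - 1)) :
    {j : Fin r → ℕ | (∀ ρ, j ρ < n) ∧ (∀ ρ, rowOf lam ρ.val ≤ j ρ) ∧
        RowSemistandard lam j} =
      {j : Fin r → ℕ |
        ((∀ ρ, j ρ < n) ∧
          (∀ ρ, rowOf (fun k => if k = n - 2 then lam (n - 2) + m
            else if k = n - 1 then lam (n - 1) - m else lam k) ρ.val ≤ j ρ) ∧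
          RowSemistandard (fun k => if k = n - 2 then lam (n - 2) + m
            else if k = n - 1 then lam (n - 1) - m else lam k) j) ∧
        (∀ ρ, rowOf lam ρ.val ≤ j ρ)} := by
  obtain ⟨a, rfl⟩ : ∃ a, n = a + 2 := ⟨n - 2, by omega⟩
  exact rowSemistandardIndices_moveBoxes hm hsum.ge

/-- If `λ_n ≠ 0` and `m ≤ λ_n` then
`J(λ) = { j ∈ J(λ(n-1,m)) : j ≥ l(λ) componentwise }`, where
`J(μ) = { j ∈ I(n,r) : j ≥ l(μ) and T_j^μ row-semistandard }` and
`λ(n-1,m) = (λ_1, …, λ_{n-1} + m, λ_n - m)` (everything written 0-indexed). -/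
theorem stmt_9 (n r : ℕ) (hn : 2 ≤ n) (hr : 0 < r)
    (lam : ℕ → ℕ) (hsupp : ∀ k, n ≤ k → lam k = 0)
    (hsum : ∑ k ∈ Finset.range n, lam k = r)
    (hlast : lam (n - 1) ≠ 0) (m : ℕ) (hm : m ≤ lam (n - 1)) :
    {j : Fin r → ℕ | (∀ ρ, j ρ < n) ∧ (∀ ρ, rowOf lam ρ.val ≤ j ρ) ∧
        RowSemistandard lam j} =
      {j : Fin r → ℕ |
        ((∀ ρ, j ρ < n) ∧
          (∀ ρ, rowOf (fun k => if k = n - 2 then lam (n - 2) + m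
            else if k = n - 1 then lam (n - 1) - m else lam k) ρ.val ≤ j ρ) ∧
          RowSemistandard (fun k => if k = n - 2 then lam (n - 2) + m
            else if k = n - 1 then lam (n - 1) - m else lam k) j) ∧
        (∀ ρ, rowOf lam ρ.val ≤ j ρ)} :=
  stmt_9_general n r hn lam hsum m hm
end

section
/- Let λ ∈ Λ(n,r), let ν ∈ {1,...,n-1}, let 0 ≤ m ≤ λ_{ν+1}, and consider the parabolic (Young) subgroups of the symmetric group Σ_r: Σ_λ, the row stabilizer of the standard λ-tableau, and Σ_{λ(ν,m)}, the row stabilizer for the composition λ(ν,m) = (λ_1, ..., λ_ν + m, λ_{ν+1} - m, ..., λ_n). Let H be a subgroup of Σ_λ of the form U_1 × ... × U_n (with U_s a subgroup of the s-th factor), and suppose U_{ν+1} equals the full (ν+1)-st factor Σ_{λ_{ν+1}}. Then (Σ_{λ(ν,m)} ∩ Σ_λ) · H = Σ_λ. -/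
/-- The Young (parabolic) subgroup `Σ_λ ≤ Σ_r`: permutations preserving the rows of
the basic `λ`-tableau. -/
def young (r : ℕ) (lam : ℕ → ℕ) : Subgroup (Equiv.Perm (Fin r)) where
  carrier := {σ | ∀ ρ : Fin r, rowOf lam (σ ρ).val = rowOf lam ρ.val}
  one_mem' := fun ρ => rfl
  mul_mem' := by
    intro σ τ hσ hτ ρ
    simpa [Equiv.Perm.mul_apply, hτ ρ] using hσ (τ ρ)
  inv_mem' := by
    intro σ hσ ρ
    simpa using (hσ (σ⁻¹ ρ)).symm

/-!
Write `σ ∈ Σ_λ` as `a * h`, where `h` acts as `σ` on row `ν + 1` and trivially elsewhere, so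
`h ∈ H`, while `a` acts as `σ` off row `ν + 1` and trivially on it. Of the partial sums
`λ_1 + ⋯ + λ_k`, passing from `λ` to `λ(ν, m)` changes only the one with `k = ν`, which grows by
`m ≤ λ_{ν+1}`. Hence a position outside row `ν + 1` of the `λ`-tableau lies in the same row of
the `λ(ν, m)`-tableau, and `a` preserves the rows of `λ(ν, m)` as well.
-/

open Finset Equiv Equiv.Perm

/-- `shiftBoxes lam ν m` is the paper's `λ(ν + 1, m)`: parts are indexed from `0`. -/
def shiftBoxes (lam : ℕ → ℕ) (ν m : ℕ) : ℕ → ℕ :=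
  fun k => if k = ν then lam ν + m else if k = ν + 1 then lam (ν + 1) - m else lam k

section PartialSums

variable {lam : ℕ → ℕ} {ν m : ℕ}

lemma sum_range_shiftBoxes_of_le {j : ℕ} (hj : j ≤ ν) :
    ∑ i ∈ range j, shiftBoxes lam ν m i = ∑ i ∈ range j, lam i :=
  sum_congr rfl fun i hi => by
    have hiν : i < ν := (mem_range.mp hi).trans_le hj
    simp [shiftBoxes, hiν.ne, (hiν.trans (Nat.lt_succ_self ν)).ne]

lemma sum_range_succ_shiftBoxes :
    ∑ i ∈ range (ν + 1), shiftBoxes lam ν m i = ∑ i ∈ range (ν + 1), lam i + m := by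
  rw [sum_range_succ, sum_range_succ, sum_range_shiftBoxes_of_le le_rfl]
  simp [shiftBoxes, add_assoc]

lemma sum_range_shiftBoxes_of_lt (hm : m ≤ lam (ν + 1)) {j : ℕ} (hj : ν + 1 < j) :
    ∑ i ∈ range j, shiftBoxes lam ν m i = ∑ i ∈ range j, lam i := by
  induction j, hj using Nat.le_induction with
  | base =>
    rw [sum_range_succ, sum_range_succ _ (ν + 1), sum_range_succ_shiftBoxes]
    simp only [shiftBoxes, if_neg (Nat.succ_ne_self ν), if_true]
    omega
  | succ j hj ih =>
    have hjν : j ≠ ν := by omega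
    have hjν' : j ≠ ν + 1 := by omega
    rw [sum_range_succ, sum_range_succ, ih]
    simp [shiftBoxes, hjν, hjν']

end PartialSums

lemma rowOf_eq_of_le_of_lt {lam : ℕ → ℕ} {x k : ℕ} (hle : ∑ i ∈ range k, lam i ≤ x)
    (hlt : x < ∑ i ∈ range (k + 1), lam i) : rowOf lam x = k := by
  refine le_antisymm (Nat.sInf_le hlt) (le_csInf ⟨k, hlt⟩ fun j hj => ?_)
  by_contra! hjk
  exact (hj.trans_le (sum_le_sum_of_subset (range_subset_range.mpr hjk))).not_ge hle

lemma rowOf_shiftBoxes {lam : ℕ → ℕ} {ν m : ℕ} (hm : m ≤ lam (ν + 1)) {x : ℕ}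
    (hx : rowOf lam x ≠ ν + 1) : rowOf (shiftBoxes lam ν m) x = rowOf lam x := by
  unfold rowOf
  congr 1
  ext k
  simp only [Set.mem_ofPred_eq]
  rcases lt_trichotomy k ν with hk | rfl | hk
  · rw [sum_range_shiftBoxes_of_le hk]
  · rw [sum_range_succ_shiftBoxes]
    refine ⟨fun hxm => ?_, fun hxk => hxk.trans_le (Nat.le_add_right _ _)⟩
    -- otherwise `x` would lie in row `k + 1` of the `lam`-tableau, since `m ≤ lam (k + 1)`
    by_contra! hkx
    refine hx (rowOf_eq_of_le_of_lt hkx ?_)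
    rw [sum_range_succ _ (k + 1)]
    omega
  · rw [sum_range_shiftBoxes_of_lt hm (by omega)]

lemma Equiv.Perm.exists_mul_eq_of_forall_iff {α : Type*} {p : α → Prop} [DecidablePred p]
    (σ : Perm α) (hσ : ∀ x, p (σ x) ↔ p x) :
    ∃ a h : Perm α, (∀ x, p x → a x = x) ∧ (∀ x, ¬p x → a x = σ x) ∧
      (∀ x, ¬p x → h x = x) ∧ σ = a * h := by
  refine ⟨ofSubtype (σ.subtypePerm (p := fun x => ¬p x) fun x => (hσ x).not),
    ofSubtype (σ.subtypePerm hσ),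
    fun x hx => ofSubtype_subtypePerm_of_not_mem (p := fun x => ¬p x) _ (not_not_intro hx),
    fun x hx => ofSubtype_subtypePerm_of_mem (p := fun x => ¬p x) _ hx,
    fun x hx => ofSubtype_subtypePerm_of_not_mem hσ hx, ?_⟩
  ext x
  by_cases hx : p x
  · rw [mul_apply, ofSubtype_subtypePerm_of_mem hσ hx, ofSubtype_subtypePerm_of_not_mem
      (p := fun x => ¬p x) _ (not_not_intro ((hσ x).mpr hx))]
  · rw [mul_apply, ofSubtype_subtypePerm_of_not_mem hσ hx,
      ofSubtype_subtypePerm_of_mem (p := fun x => ¬p x) _ hx]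

lemma exists_mem_young_shiftBoxes_mul_eq {r : ℕ} {lam : ℕ → ℕ} {ν m : ℕ}
    (hm : m ≤ lam (ν + 1)) {σ : Perm (Fin r)} (hσ : σ ∈ young r lam) :
    ∃ a ∈ young r (shiftBoxes lam ν m) ⊓ young r lam, ∃ h : Perm (Fin r),
      (∀ ρ : Fin r, rowOf lam ρ.val ≠ ν + 1 → h ρ = ρ) ∧ σ = a * h := by
  have hrow : ∀ ρ : Fin r, rowOf lam (σ ρ).val = ν + 1 ↔ rowOf lam ρ.val = ν + 1 :=
    fun ρ => by rw [hσ ρ]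
  obtain ⟨a, h, ha_on, ha_off, hh, rfl⟩ :=
    σ.exists_mul_eq_of_forall_iff (p := fun ρ => rowOf lam ρ.val = ν + 1) hrow
  refine ⟨a, Subgroup.mem_inf.mpr ⟨fun ρ => ?_, fun ρ => ?_⟩, h, hh, rfl⟩
  · by_cases hρ : rowOf lam ρ.val = ν + 1
    · rw [ha_on ρ hρ]
    · rw [ha_off ρ hρ, rowOf_shiftBoxes hm ((hσ ρ).trans_ne hρ), rowOf_shiftBoxes hm hρ, hσ ρ]
  · by_cases hρ : rowOf lam ρ.val = ν + 1
    · rw [ha_on ρ hρ]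
    · rw [ha_off ρ hρ, hσ ρ]

/-- Rows are indexed from `0`, so `v` is the paper's `ν` and row `v` is its row `ν + 1`; `hfull`
says that the factor of `H = U_1 × ⋯ × U_n` on that row is the full symmetric group. -/
theorem stmt_11_general (r : ℕ) (lam : ℕ → ℕ) (v : ℕ) (hv1 : 1 ≤ v) (m : ℕ) (hm : m ≤ lam v)
    (H : Subgroup (Equiv.Perm (Fin r))) (hH : H ≤ young r lam)
    (hfull : ∀ σ : Equiv.Perm (Fin r),
      (∀ ρ : Fin r, rowOf lam ρ.val ≠ v → σ ρ = ρ) → σ ∈ H) :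
    ∀ σ : Equiv.Perm (Fin r), σ ∈ young r lam ↔
      ∃ a ∈ (young r (fun k => if k = v - 1 then lam (v - 1) + m
          else if k = v then lam v - m else lam k)) ⊓ young r lam,
        ∃ h ∈ H, σ = a * h := by
  obtain ⟨ν, rfl⟩ : ∃ ν, v = ν + 1 := ⟨v - 1, by omega⟩
  simp only [Nat.add_sub_cancel]
  intro σ
  constructor
  · intro hσ
    obtain ⟨a, ha, h, hrow, rfl⟩ := exists_mem_young_shiftBoxes_mul_eq hm hσ
    exact ⟨a, ha, h, hfull h hrow, rfl⟩
  · rintro ⟨a, ha, h, hh, rfl⟩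
    exact (young r lam).mul_mem (Subgroup.mem_inf.mp ha).2 (hH hh)

/-- Lemma 1 of the paper: if `H ≤ Σ_λ` is a product subgroup `U_1 × ⋯ × U_n` whose
`(ν+1)`-st factor is the full symmetric group on row `ν+1` (expressed here by: `H`
contains every permutation supported on row `ν+1`, written 0-indexed as row `v`),
then `(Σ_{λ(ν,m)} ∩ Σ_λ) · H = Σ_λ` for any `0 ≤ m ≤ λ_{ν+1}`. -/
theorem stmt_11 (n r : ℕ) (hn : 2 ≤ n) (hr : 0 < r)
    (lam : ℕ → ℕ) (hsupp : ∀ k, n ≤ k → lam k = 0)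
    (hsum : ∑ k ∈ Finset.range n, lam k = r)
    (v : ℕ) (hv1 : 1 ≤ v) (hv2 : v ≤ n - 1) (m : ℕ) (hm : m ≤ lam v)
    (H : Subgroup (Equiv.Perm (Fin r))) (hH : H ≤ young r lam)
    (hfull : ∀ σ : Equiv.Perm (Fin r),
      (∀ ρ : Fin r, rowOf lam ρ.val ≠ v → σ ρ = ρ) → σ ∈ H) :
    ∀ σ : Equiv.Perm (Fin r), σ ∈ young r lam ↔
      ∃ a ∈ (young r (fun k => if k = v - 1 then lam (v - 1) + m
          else if k = v then lam v - m else lam k)) ⊓ young r lam,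
        ∃ h ∈ H, σ = a * h :=
  stmt_11_general r lam v hv1 m hm H hH hfull
end
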